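/- arXiv:2501.06108 — 5 statements merged into one kernel-verified Lean document; each statement's English description precedes it below -/
import Mathlib

section
/- Let π : Ω → (0,∞) be a positive probability mass function on Ω = {1,…,q}^N, and let G be any probability measure on Ω. For each n ∈ {1,…,N}, sites i₁ < … < i_n and colors μ₁,…,μ_n, define the coupling J_{i₁…i_n}^{μ₁…μ_n} = Σ_{K ⊆ [n]} (−1)^{n−|K|} E_{u∼G}[ln π(u | u_{i_k} = μ_k for k ∈ K)]. Then the Hamiltonian H(v) = −Σ_{n=1}^{N} Σ_{i₁<…<i_n} J_{i₁…i_n}^{v_{i₁}…v_{i_n}} satisfies H(v) = −ln π(v) + E_{u∼G}[ln π(u)] for all v ∈ Ω, so that π(v) ∝ exp(−H(v)). -/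
open Finset

lemma real_sum_powerset_neg_one_pow_card {α : Type*} [DecidableEq α] {x : Finset α} :
    (∑ m ∈ x.powerset, (-1 : ℝ) ^ #m) = if x = ∅ then 1 else 0 := by
  have := Finset.sum_powerset_neg_one_pow_card (x := x)
  have h : ((∑ m ∈ x.powerset, (-1 : ℤ) ^ #m : ℤ) : ℝ)
      = ∑ m ∈ x.powerset, (-1 : ℝ) ^ #m := by push_cast; ring_nf
  rw [← h, this]
  split <;> norm_num

lemma mobius_sum {α : Type*} [Fintype α] [DecidableEq α] (F : Finset α → ℝ) :
    ∑ S ∈ (Finset.univ : Finset α).powerset,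
      ∑ K ∈ S.powerset, (-1 : ℝ) ^ (S.card - K.card) * F K = F Finset.univ := by
  have h1 : ∀ S ∈ (Finset.univ : Finset α).powerset,
      ∑ K ∈ S.powerset, (-1 : ℝ) ^ (S.card - K.card) * F K
      = ∑ K ∈ (Finset.univ : Finset α).powerset,
          if K ⊆ S then (-1 : ℝ) ^ (S.card - K.card) * F K else 0 := by
    intro S _
    rw [← Finset.sum_filter]
    congr 1
    ext K
    simp [Finset.mem_powerset, Finset.subset_univ]
  rw [Finset.sum_congr rfl h1, Finset.sum_comm]
  have h2 : ∀ K ∈ (Finset.univ : Finset α).powerset,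
      (∑ S ∈ (Finset.univ : Finset α).powerset,
        if K ⊆ S then (-1 : ℝ) ^ (S.card - K.card) * F K else 0)
      = (if K = Finset.univ then 1 else 0) * F K := by
    intro K _
    rw [← Finset.sum_filter]
    have hbij : ∑ S ∈ (Finset.univ : Finset α).powerset.filter (fun S => K ⊆ S),
        (-1 : ℝ) ^ (S.card - K.card) * F K
        = ∑ T ∈ Kᶜ.powerset, (-1 : ℝ) ^ T.card * F K := by
      refine Finset.sum_nbij' (fun S => S \ K) (fun T => T ∪ K) ?_ ?_ ?_ ?_ ?_
      · intro S hS
        simp only [Finset.mem_filter, Finset.mem_powerset] at hS ⊢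
        intro x hx
        simp only [Finset.mem_sdiff] at hx
        simpa [Finset.mem_compl] using hx.2
      · intro T hT
        simp only [Finset.mem_powerset] at hT
        simp [Finset.mem_filter, Finset.subset_univ]
      · intro S hS
        simp only [Finset.mem_filter, Finset.mem_powerset] at hS
        exact Finset.sdiff_union_of_subset hS.2
      · intro T hT
        simp only [Finset.mem_powerset] at hT
        show (T ∪ K) \ K = T
        rw [Finset.union_sdiff_right]
        exact Finset.sdiff_eq_self_of_disjoint
          (Finset.disjoint_left.2 fun x hx hxK => by
            have := hT hx; simp [Finset.mem_compl] at this; exact this hxK)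
      · intro S hS
        simp only [Finset.mem_filter, Finset.mem_powerset] at hS
        congr 2
        rw [Finset.card_sdiff_of_subset hS.2]
    rw [hbij, ← Finset.sum_mul, real_sum_powerset_neg_one_pow_card]
    congr 1
    simp [Finset.compl_eq_empty_iff]
  rw [Finset.sum_congr rfl h2]
  simp only [ite_mul, one_mul, zero_mul, Finset.sum_ite_eq']
  simp

/-- Gauge invariance: for any positive `π` on `{1,…,q}^N` and any probability measure `G`,
the generalized multi-body Potts Hamiltonian whose couplings are given by the
inclusion–exclusion formula (indexed here by nonempty subsets `S` of sites, with
`K ⊆ S` the inclusion–exclusion subsets) satisfies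
`H(v) = -ln π(v) + E_G[ln π]`, so that `π(v) ∝ exp(-H(v))`. -/
theorem stmt1 (N q : ℕ)
    (π : (Fin N → Fin q) → ℝ) (hπ : ∀ v, 0 < π v)
    (g : (Fin N → Fin q) → ℝ) (hg : ∀ u, 0 ≤ g u) (hgsum : ∑ u, g u = 1)
    (v : Fin N → Fin q) :
    (-(∑ S ∈ (Finset.univ : Finset (Fin N)).powerset.filter (fun S => S.Nonempty),
        ∑ K ∈ S.powerset, (-1 : ℝ) ^ (S.card - K.card) *
          ∑ u, g u * Real.log (π (fun j => if j ∈ K then v j else u j))))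
      = - Real.log (π v) + ∑ u, g u * Real.log (π u) := by
  set F : Finset (Fin N) → ℝ :=
    fun K => ∑ u, g u * Real.log (π (fun j => if j ∈ K then v j else u j)) with hF
  have hinner : ∀ S : Finset (Fin N),
      ∑ K ∈ S.powerset, (-1 : ℝ) ^ (S.card - K.card) *
        (∑ u, g u * Real.log (π (fun j => if j ∈ K then v j else u j)))
      = ∑ K ∈ S.powerset, (-1 : ℝ) ^ (S.card - K.card) * F K := fun S => rfl
  have hsplit := Finset.sum_filter_add_sum_filter_not
    (Finset.univ : Finset (Fin N)).powerset (fun S => S.Nonempty)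
    (fun S => ∑ K ∈ S.powerset, (-1 : ℝ) ^ (S.card - K.card) * F K)
  have hnot : (Finset.univ : Finset (Fin N)).powerset.filter (fun S => ¬ S.Nonempty)
      = {∅} := by
    ext S
    simp [Finset.not_nonempty_iff_eq_empty]
  have hempty : ∑ K ∈ (∅ : Finset (Fin N)).powerset,
      (-1 : ℝ) ^ ((∅ : Finset (Fin N)).card - K.card) * F K = F ∅ := by
    simp
  have hFuniv : F Finset.univ = Real.log (π v) := by
    rw [hF]
    simp only [Finset.mem_univ, if_true]
    rw [← Finset.sum_mul, hgsum, one_mul]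
  have hFempty : F ∅ = ∑ u, g u * Real.log (π u) := by
    simp [hF]
  have htot : ∑ S ∈ (Finset.univ : Finset (Fin N)).powerset,
      ∑ K ∈ S.powerset, (-1 : ℝ) ^ (S.card - K.card) * F K = F Finset.univ :=
    mobius_sum F
  have key : ∑ S ∈ (Finset.univ : Finset (Fin N)).powerset.filter (fun S => S.Nonempty),
      ∑ K ∈ S.powerset, (-1 : ℝ) ^ (S.card - K.card) * F K
      = F Finset.univ - F ∅ := by
    rw [hnot, Finset.sum_singleton, hempty] at hsplit
    linarith [htot, hsplit]
  calc (-(∑ S ∈ (Finset.univ : Finset (Fin N)).powerset.filter (fun S => S.Nonempty),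
        ∑ K ∈ S.powerset, (-1 : ℝ) ^ (S.card - K.card) *
          ∑ u, g u * Real.log (π (fun j => if j ∈ K then v j else u j))))
      = -(F Finset.univ - F ∅) := by
        rw [Finset.sum_congr rfl (fun S _ => hinner S), key]
    _ = - Real.log (π v) + ∑ u, g u * Real.log (π u) := by
        rw [hFuniv, hFempty]; ring
end

section
/- Let π : Ω → (0,∞) on Ω = {1,…,q}^N and let G be a product measure with probability mass g(v) = ∏_{i=1}^N g_i(v_i). Define J_{i₁…i_n}^{μ₁…μ_n} = Σ_{K⊆[n]} (−1)^{n−|K|} E_{u∼G}[ln π(u | u_{i_k}=μ_k : k∈K)]. Then for all distinct sites i₁,…,i_n and all colors μ₁,…,μ_{n−1}: Σ_{μ'=1}^{q} g_{i_n}(μ') J_{i₁…i_n}^{μ₁…μ_{n−1}μ'} = 0. -/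
open Finset

/-- Configuration obtained from `u` by setting coordinate `i k` to `μ k` for every `k ∈ K`. -/
noncomputable def updOn {n N q : ℕ} (i : Fin n → Fin N) (K : Finset (Fin n))
    (μ : Fin n → Fin q) (u : Fin N → Fin q) : Fin N → Fin q :=
  fun j => if h : ∃ k, k ∈ K ∧ i k = j then μ h.choose else u j

/-- `updOn` only depends on the values of `μ` on `K`. -/
lemma updOn_congr {n N q : ℕ} (i : Fin n → Fin N) (K : Finset (Fin n))
    {μ₁ μ₂ : Fin n → Fin q} (hμ : ∀ k ∈ K, μ₁ k = μ₂ k) (u : Fin N → Fin q) :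
    updOn i K μ₁ u = updOn i K μ₂ u := by
  funext j
  unfold updOn
  split
  · next h => exact hμ _ h.choose_spec.1
  · rfl

lemma updOn_insert {n N q : ℕ} {i : Fin n → Fin N} (hi : Function.Injective i)
    {a : Fin n} {K : Finset (Fin n)} (ha : a ∉ K) (μ : Fin n → Fin q) (u : Fin N → Fin q) :
    updOn i (insert a K) μ u = Function.update (updOn i K μ u) (i a) (μ a) := by
  funext j
  rcases eq_or_ne j (i a) with rfl | hj
  · have h : ∃ k, k ∈ insert a K ∧ i k = i a := ⟨a, Finset.mem_insert_self _ _, rfl⟩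
    rw [Function.update_self]
    unfold updOn
    rw [dif_pos h]
    have := h.choose_spec
    rw [hi this.2]
  · rw [Function.update_of_ne hj]
    unfold updOn
    by_cases hK : ∃ k, k ∈ K ∧ i k = j
    · have hK' : ∃ k, k ∈ insert a K ∧ i k = j :=
        ⟨hK.choose, Finset.mem_insert_of_mem hK.choose_spec.1, hK.choose_spec.2⟩
      rw [dif_pos hK', dif_pos hK]
      have e1 := hK'.choose_spec.2
      have e2 := hK.choose_spec.2
      rw [hi (e1.trans e2.symm)]
    · have hK' : ¬ ∃ k, k ∈ insert a K ∧ i k = j := by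
        rintro ⟨k, hk, hkj⟩
        rcases Finset.mem_insert.mp hk with rfl | hk'
        · exact hj hkj.symm
        · exact hK ⟨k, hk', hkj⟩
      rw [dif_neg hK', dif_neg hK]

lemma updOn_update {n N q : ℕ} {i : Fin n → Fin N} (hi : Function.Injective i)
    {a : Fin n} {K : Finset (Fin n)} (ha : a ∉ K) (μ : Fin n → Fin q)
    (u : Fin N → Fin q) (b : Fin q) :
    updOn i K μ (Function.update u (i a) b) = Function.update (updOn i K μ u) (i a) b := by
  funext j
  rcases eq_or_ne j (i a) with rfl | hj
  · have hK : ¬ ∃ k, k ∈ K ∧ i k = i a := by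
      rintro ⟨k, hk, hkj⟩; exact ha (hi hkj ▸ hk)
    rw [Function.update_self]
    unfold updOn
    rw [dif_neg hK, Function.update_self]
  · rw [Function.update_of_ne hj]
    unfold updOn
    by_cases hK : ∃ k, k ∈ K ∧ i k = j
    · rw [dif_pos hK, dif_pos hK]
    · rw [dif_neg hK, dif_neg hK, Function.update_of_ne hj]

/-- Averaging a function of `update u i₀ μ'` over `μ'` with weights `g i₀` under the product
measure equals the plain expectation: the involution `(a, u) ↦ (u i₀, update u i₀ a)`
preserves the product mass. -/
lemma avg_update {N q : ℕ} (g : Fin N → Fin q → ℝ) (i₀ : Fin N)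
    (h1 : ∑ a, g i₀ a = 1) (F : (Fin N → Fin q) → ℝ) :
    ∑ μ' : Fin q, g i₀ μ' * ∑ u : Fin N → Fin q,
        (∏ l, g l (u l)) * F (Function.update u i₀ μ')
      = ∑ u : Fin N → Fin q, (∏ l, g l (u l)) * F u := by
  have hR : ∑ u : Fin N → Fin q, (∏ l, g l (u l)) * F u
      = ∑ p : Fin q × (Fin N → Fin q), g i₀ p.1 * ((∏ l, g l (p.2 l)) * F p.2) := by
    rw [Fintype.sum_prod_type]
    simp_rw [← Finset.mul_sum]
    rw [← Finset.sum_mul, h1, one_mul]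
  have hL : ∑ μ' : Fin q, g i₀ μ' * ∑ u : Fin N → Fin q,
        (∏ l, g l (u l)) * F (Function.update u i₀ μ')
      = ∑ p : Fin q × (Fin N → Fin q),
        g i₀ p.1 * ((∏ l, g l (p.2 l)) * F (Function.update p.2 i₀ p.1)) := by
    rw [Fintype.sum_prod_type]
    simp_rw [← Finset.mul_sum]
  rw [hL, hR]
  have mass : ∀ (a : Fin q) (u : Fin N → Fin q),
      g i₀ a * (∏ l, g l (u l)) = g i₀ (u i₀) * ∏ l, g l (Function.update u i₀ a l) := by
    intro a u
    have h2 : (fun l => g l (Function.update u i₀ a l))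
        = Function.update (fun l => g l (u l)) i₀ (g i₀ a) := by
      funext l
      rcases eq_or_ne l i₀ with rfl | hl
      · simp
      · simp [Function.update_of_ne hl]
    rw [h2, Finset.prod_update_of_mem (Finset.mem_univ i₀), Finset.sdiff_singleton_eq_erase,
      ← Finset.mul_prod_erase Finset.univ (fun l => g l (u l)) (Finset.mem_univ i₀)]
    ring
  let e : (Fin q × (Fin N → Fin q)) ≃ (Fin q × (Fin N → Fin q)) :=
    ⟨fun p => (p.2 i₀, Function.update p.2 i₀ p.1),
     fun p => (p.2 i₀, Function.update p.2 i₀ p.1),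
     by rintro ⟨b, u⟩; simp [Function.update_idem, Function.update_eq_self],
     by rintro ⟨b, u⟩; simp [Function.update_idem, Function.update_eq_self]⟩
  refine Fintype.sum_equiv e _ _ ?_
  rintro ⟨b, u⟩
  show g i₀ b * ((∏ l, g l (u l)) * F (Function.update u i₀ b))
      = g i₀ (u i₀) * ((∏ l, g l (Function.update u i₀ b l)) * F (Function.update u i₀ b))
  rw [← mul_assoc, ← mul_assoc, mass b u]

/-- Gauge fixing: if `G` is a product measure with single-site masses `g i`, then the
`g`-weighted sum of an `n`-body inclusion–exclusion coupling over its last color index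
vanishes. -/
theorem stmt2 (N q n : ℕ)
    (π : (Fin N → Fin q) → ℝ) (hπ : ∀ v, 0 < π v)
    (g : Fin N → Fin q → ℝ) (hg : ∀ i μ, 0 ≤ g i μ) (hgsum : ∀ i, ∑ μ, g i μ = 1)
    (i : Fin (n + 1) → Fin N) (hi : Function.Injective i)
    (μ : Fin (n + 1) → Fin q) :
    ∑ μ' : Fin q, g (i (Fin.last n)) μ' *
      (∑ K : Finset (Fin (n + 1)), (-1 : ℝ) ^ (n + 1 - K.card) *
        ∑ u : Fin N → Fin q, (∏ l, g l (u l)) *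
          Real.log (π (updOn i K (Function.update μ (Fin.last n) μ') u))) = 0 := by
  set a : Fin (n + 1) := Fin.last n with ha
  -- swap the two outer sums
  conv_lhs => enter [2, μ']; rw [Finset.mul_sum]
  rw [Finset.sum_comm]
  -- reindex over the powerset of `univ` and pair `K` with `insert a K`
  have huniv : (Finset.univ : Finset (Finset (Fin (n + 1))))
      = (Finset.univ : Finset (Fin (n + 1))).powerset := (Finset.powerset_univ).symm
  have hins : (Finset.univ : Finset (Fin (n + 1)))
      = insert a (Finset.univ.erase a) := (Finset.insert_erase (Finset.mem_univ a)).symm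
  rw [huniv, hins, Finset.sum_powerset_insert (Finset.notMem_erase a _),
    ← Finset.sum_add_distrib]
  apply Finset.sum_eq_zero
  intro K hK
  rw [Finset.mem_powerset] at hK
  have haK : a ∉ K := fun h => Finset.notMem_erase a _ (hK h)
  have hcard : K.card ≤ n := by
    have := Finset.card_le_card hK
    simpa [Finset.card_erase_of_mem (Finset.mem_univ a)] using this
  -- the base (μ'-independent) value
  set S₀ : ℝ := ∑ u : Fin N → Fin q, (∏ l, g l (u l)) * Real.log (π (updOn i K μ u)) with hS₀
  have hupd : ∀ (μ' : Fin q) (u : Fin N → Fin q),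
      updOn i K (Function.update μ a μ') u = updOn i K μ u := by
    intro μ' u
    exact updOn_congr i K
      (fun k hk => Function.update_of_ne (fun h : k = a => haK (h ▸ hk)) μ' μ) u
  have hSK : ∀ μ' : Fin q,
      (∑ u : Fin N → Fin q, (∏ l, g l (u l)) *
        Real.log (π (updOn i K (Function.update μ a μ') u))) = S₀ := by
    intro μ'
    apply Finset.sum_congr rfl
    intro u _
    rw [hupd]
  have hSins : ∀ μ' : Fin q,
      (∑ u : Fin N → Fin q, (∏ l, g l (u l)) *
        Real.log (π (updOn i (insert a K) (Function.update μ a μ') u)))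
      = ∑ u : Fin N → Fin q, (∏ l, g l (u l)) *
          Real.log (π (updOn i K μ (Function.update u (i a) μ'))) := by
    intro μ'
    apply Finset.sum_congr rfl
    intro u _
    rw [updOn_insert hi haK, updOn_update hi haK, Function.update_self, hupd]
  -- compute the two sums over μ'
  have h₁ : ∑ μ' : Fin q, g (i a) μ' * ((-1 : ℝ) ^ (n + 1 - K.card) *
      ∑ u : Fin N → Fin q, (∏ l, g l (u l)) *
        Real.log (π (updOn i K (Function.update μ a μ') u)))
      = (-1 : ℝ) ^ (n + 1 - K.card) * S₀ := by
    simp_rw [hSK]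
    rw [← Finset.sum_mul, hgsum, one_mul]
  have h₂ : ∑ μ' : Fin q, g (i a) μ' * ((-1 : ℝ) ^ (n + 1 - (insert a K).card) *
      ∑ u : Fin N → Fin q, (∏ l, g l (u l)) *
        Real.log (π (updOn i (insert a K) (Function.update μ a μ') u)))
      = (-1 : ℝ) ^ (n - K.card) * S₀ := by
    simp_rw [hSins]
    rw [Finset.card_insert_of_notMem haK]
    have hc : n + 1 - (K.card + 1) = n - K.card := by omega
    rw [hc]
    simp_rw [mul_left_comm (g (i a) _)]
    rw [← Finset.mul_sum]
    congr 1
    exact avg_update g (i a) (hgsum (i a)) (fun v => Real.log (π (updOn i K μ v)))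
  rw [h₁, h₂]
  have hpow : (-1 : ℝ) ^ (n + 1 - K.card) = -(-1 : ℝ) ^ (n - K.card) := by
    have : n + 1 - K.card = (n - K.card) + 1 := by omega
    rw [this, pow_succ]
    ring
  rw [hpow]
  ring
end

section
/- In the setting of the gauge-fixing theorem, if g_i(u) = δ_{q,u} (the Dirac measure concentrated on color q at every site), then the resulting couplings satisfy the lattice-gas condition: J_{i₁…i_n}^{μ₁…μ_{n−1} q} = 0 for all distinct sites i₁,…,i_n and colors μ₁,…,μ_{n−1}. -/
open Finset

lemma updOn_insert_eq {n N q : ℕ} (i : Fin n → Fin N) (hi : Function.Injective i)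
    (K : Finset (Fin n)) (a : Fin n) (μ : Fin n → Fin q) (u : Fin N → Fin q)
    (hμ : μ a = u (i a)) : updOn i (insert a K) μ u = updOn i K μ u := by
  funext j
  unfold updOn
  by_cases h2 : ∃ k, k ∈ K ∧ i k = j
  · have h1 : ∃ k, k ∈ insert a K ∧ i k = j :=
      ⟨h2.choose, Finset.mem_insert_of_mem h2.choose_spec.1, h2.choose_spec.2⟩
    rw [dif_pos h1, dif_pos h2]
    congr 1
    exact hi (h1.choose_spec.2.trans h2.choose_spec.2.symm)
  · rw [dif_neg h2]
    by_cases h1 : ∃ k, k ∈ insert a K ∧ i k = j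
    · rw [dif_pos h1]
      have hk := h1.choose_spec
      have ha : h1.choose = a := by
        rcases Finset.mem_insert.mp hk.1 with h | h
        · exact h
        · exact absurd ⟨h1.choose, h, hk.2⟩ h2
      have hj : i a = j := ha ▸ hk.2
      rw [ha, hμ, hj]
    · rw [dif_neg h1]

/-- Lattice-gas gauge: with `G` the degenerate measure concentrated on the configuration
with all sites equal to the last color, any inclusion–exclusion coupling with its last
color index equal to the last color vanishes. -/
theorem stmt3 (N q n : ℕ)
    (π : (Fin N → Fin (q + 1)) → ℝ) (hπ : ∀ v, 0 < π v)
    (i : Fin (n + 1) → Fin N) (hi : Function.Injective i)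
    (μ : Fin (n + 1) → Fin (q + 1)) :
    ∑ K : Finset (Fin (n + 1)), (-1 : ℝ) ^ (n + 1 - K.card) *
      Real.log (π (updOn i K (Function.update μ (Fin.last n) (Fin.last q))
        (fun _ => Fin.last q))) = 0 := by
  set μ' := Function.update μ (Fin.last n) (Fin.last q) with hμ'
  set u : Fin N → Fin (q + 1) := fun _ => Fin.last q with hu
  set f : Finset (Fin (n + 1)) → ℝ := fun K =>
    (-1 : ℝ) ^ (n + 1 - K.card) * Real.log (π (updOn i K μ' u)) with hf
  have : ∑ K : Finset (Fin (n + 1)), f K = 0 := by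
    rw [← Finset.powerset_univ,
      show (univ : Finset (Fin (n + 1))) = insert (Fin.last n) (univ.erase (Fin.last n)) from
        (Finset.insert_erase (mem_univ _)).symm,
      Finset.sum_powerset_insert (Finset.notMem_erase _ _)]
    have key : ∀ t ∈ (univ.erase (Fin.last n)).powerset, f (insert (Fin.last n) t) = -f t := by
      intro t ht
      have hlast : Fin.last n ∉ t := fun h =>
        Finset.notMem_erase _ _ (Finset.mem_powerset.mp ht h)
      have hcard : t.card ≤ n := by
        have := Finset.card_le_card (Finset.mem_powerset.mp ht)
        simpa [Finset.card_erase_of_mem, Fintype.card_fin] using this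
      have hupd : updOn i (insert (Fin.last n) t) μ' u = updOn i t μ' u :=
        updOn_insert_eq i hi t _ μ' u (by simp [hμ', hu])
      simp only [hf, hupd, Finset.card_insert_of_notMem hlast]
      have h1 : n + 1 - (t.card + 1) = n - t.card := by omega
      have h2 : n + 1 - t.card = (n - t.card) + 1 := by omega
      rw [h1, h2, pow_succ]
      ring
    rw [Finset.sum_congr rfl key]
    simp
  simpa [hf] using this
end

section
/- Let π be a strictly positive function on {1,…,q}^N of the purely pairwise form π(v) ∝ exp(Σ_{i<j} Σ_{μν} J_{ij}^{μν} δ_{μ,v_i} δ_{ν,v_j} + Σ_{i,μ} H_i^μ δ_{μ,v_i}) with couplings in the zero-sum gauge (Σ_{μ} Ĵ_{ij}^{μν} = Σ_ν Ĵ_{ij}^{μν} = 0). Define the likelihood differential ratio r̂_{ij}^{μν}(v) = (1/q²) Σ_{μ',ν'} ln[ π(v|v_i=μ, v_j=ν) π(v|v_i=μ', v_j=ν') / (π(v|v_i=μ, v_j=ν') π(v|v_i=μ', v_j=ν)) ]. Then r̂_{ij}^{μν}(v) = Ĵ_{ij}^{μν} for every configuration v, independently of v. -/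
open Finset

/-- For a purely pairwise Potts model in the zero-sum gauge, the likelihood differential
ratio is configuration-independent and equals the zero-sum pairwise coupling. -/
theorem stmt11 (N q : ℕ)
    (π : (Fin N → Fin q) → ℝ)
    (J : Fin N → Fin N → Fin q → Fin q → ℝ) (H : Fin N → Fin q → ℝ)
    (C : ℝ) (hC : 0 < C)
    (hπ : ∀ v, π v = C * Real.exp
      ((∑ p ∈ (Finset.univ : Finset (Fin N × Fin N)).filter (fun p => p.1 < p.2),
          J p.1 p.2 (v p.1) (v p.2)) + ∑ i, H i (v i)))
    (hzs₁ : ∀ i j μ, ∑ ν : Fin q, J i j μ ν = 0)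
    (hzs₂ : ∀ i j ν, ∑ μ : Fin q, J i j μ ν = 0)
    (i j : Fin N) (hij : i < j) (μ ν : Fin q) (v : Fin N → Fin q) :
    (1 / (q : ℝ) ^ 2) * ∑ μ' : Fin q, ∑ ν' : Fin q,
        Real.log (π (Function.update (Function.update v i μ) j ν)
            * π (Function.update (Function.update v i μ') j ν')
          / (π (Function.update (Function.update v i μ) j ν')
            * π (Function.update (Function.update v i μ') j ν)))
      = J i j μ ν := by
  have hq : 0 < (q : ℝ) := by exact_mod_cast (Fin.pos μ)
  have hne : i ≠ j := ne_of_lt hij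
  set E : (Fin N → Fin q) → ℝ := fun u =>
      (∑ p ∈ (Finset.univ : Finset (Fin N × Fin N)).filter (fun p => p.1 < p.2),
          J p.1 p.2 (u p.1) (u p.2)) + ∑ i', H i' (u i') with hE
  have hpos : ∀ u, 0 < π u := by
    intro u; rw [hπ]; positivity
  have hlogC : ∀ u, Real.log (π u) = Real.log C + E u := by
    intro u
    rw [hπ, Real.log_mul hC.ne' (Real.exp_pos _).ne', Real.log_exp, hE]
  have hlog : ∀ a b c d : Fin N → Fin q,
      Real.log (π a * π b / (π c * π d)) = E a + E b - E c - E d := by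
    intro a b c d
    rw [Real.log_div (mul_pos (hpos a) (hpos b)).ne' (mul_pos (hpos c) (hpos d)).ne',
        Real.log_mul (hpos a).ne' (hpos b).ne',
        Real.log_mul (hpos c).ne' (hpos d).ne',
        hlogC, hlogC, hlogC, hlogC]
    ring
  set w : Fin q → Fin q → (Fin N → Fin q) := fun a b =>
      Function.update (Function.update v i a) j b with hwdef
  have hw : ∀ a b k, w a b k = if k = j then b else if k = i then a else v k := by
    intro a b k
    simp [hwdef, Function.update_apply]
  have key : ∀ a b a' b' : Fin q,
      E (w a b) + E (w a' b') - E (w a b') - E (w a' b)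
        = J i j a b + J i j a' b' - J i j a b' - J i j a' b := by
    intro a b a' b'
    have hsplit : E (w a b) + E (w a' b') - E (w a b') - E (w a' b)
        = (∑ p ∈ (Finset.univ : Finset (Fin N × Fin N)).filter (fun p => p.1 < p.2),
            (J p.1 p.2 (w a b p.1) (w a b p.2) + J p.1 p.2 (w a' b' p.1) (w a' b' p.2)
              - J p.1 p.2 (w a b' p.1) (w a b' p.2) - J p.1 p.2 (w a' b p.1) (w a' b p.2)))
          + ∑ k, (H k (w a b k) + H k (w a' b' k) - H k (w a b' k) - H k (w a' b k)) := by
      simp only [hE, Finset.sum_add_distrib, Finset.sum_sub_distrib]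
      ring
    rw [hsplit]
    have hH : ∑ k, (H k (w a b k) + H k (w a' b' k) - H k (w a b' k) - H k (w a' b k)) = 0 := by
      apply Finset.sum_eq_zero
      intro k _
      simp only [hw]
      split_ifs <;> ring
    rw [hH, add_zero]
    have hpair : ∀ p ∈ (Finset.univ : Finset (Fin N × Fin N)).filter (fun p => p.1 < p.2),
        (J p.1 p.2 (w a b p.1) (w a b p.2) + J p.1 p.2 (w a' b' p.1) (w a' b' p.2)
          - J p.1 p.2 (w a b' p.1) (w a b' p.2) - J p.1 p.2 (w a' b p.1) (w a' b p.2))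
        = if p = (i, j) then J i j a b + J i j a' b' - J i j a b' - J i j a' b else 0 := by
      intro p hp
      have hlt : p.1 < p.2 := (Finset.mem_filter.mp hp).2
      obtain ⟨k1, k2⟩ := p
      simp only at hlt
      rcases eq_or_ne k1 i with h1i | h1i <;> rcases eq_or_ne k1 j with h1j | h1j <;>
        rcases eq_or_ne k2 i with h2i | h2i <;> rcases eq_or_ne k2 j with h2j | h2j <;>
        first
          | (exfalso; omega)
          | (simp only [hw, Prod.mk.injEq, h1i, h1j, h2i, h2j, hne, if_true, if_false,
              and_true, true_and, and_false, false_and, if_neg hne,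
              eq_self_iff_true, if_pos, ite_true, ite_false, if_neg, reduceIte]
             <;> simp [h1i, h1j, h2i, h2j, hne] <;> try ring)
    rw [Finset.sum_congr rfl hpair, Finset.sum_ite_eq' _ ((i, j) : Fin N × Fin N)]
    simp [hij]
  have hkey' : ∀ μ' ν' : Fin q,
      Real.log (π (w μ ν) * π (w μ' ν') / (π (w μ ν') * π (w μ' ν)))
        = J i j μ ν + J i j μ' ν' - J i j μ ν' - J i j μ' ν := by
    intro μ' ν'
    rw [hlog, key]
  calc (1 / (q : ℝ) ^ 2) * ∑ μ' : Fin q, ∑ ν' : Fin q,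
        Real.log (π (w μ ν) * π (w μ' ν') / (π (w μ ν') * π (w μ' ν)))
      = (1 / (q : ℝ) ^ 2) * ∑ μ' : Fin q, ∑ ν' : Fin q,
        (J i j μ ν + J i j μ' ν' - J i j μ ν' - J i j μ' ν) := by
        congr 1; exact Finset.sum_congr rfl fun μ' _ => Finset.sum_congr rfl fun ν' _ => hkey' μ' ν'
    _ = (1 / (q : ℝ) ^ 2) * ((q : ℝ) ^ 2 * J i j μ ν) := by
        congr 1
        simp only [Finset.sum_add_distrib, Finset.sum_sub_distrib, hzs₁, hzs₂,
          Finset.sum_const, Finset.card_univ, Fintype.card_fin, nsmul_eq_mul,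
          Finset.sum_const_zero, smul_zero, ← Finset.mul_sum, mul_zero]
        ring
    _ = J i j μ ν := by field_simp
end

section
/- Let π be strictly positive on {1,…,q}^N with purely pairwise interactions (as in the pairwise-model definition). Then the variance Var_{u∼U}[ r̂_{ij}^{μν}(u) ] = 0 for all i, j, μ, ν, and hence the higher-order detector R̂_{ij}^{(2)} = sqrt( (1/q²) Σ_{μν} Var_{u∼U}[ r̂_{ij}^{μν}(u) ] ) vanishes. -/
open Finset

/-- Uniform expectation of a function of the configuration. -/
noncomputable def EU {N q : ℕ} (f : (Fin N → Fin q) → ℝ) : ℝ :=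
  (1 / (q : ℝ) ^ N) * ∑ u : Fin N → Fin q, f u

/-- Likelihood differential ratio `r̂_{ij}^{μν}(v)`. -/
noncomputable def rhat {N q : ℕ} (π : (Fin N → Fin q) → ℝ) (i j : Fin N)
    (μ ν : Fin q) (v : Fin N → Fin q) : ℝ :=
  (1 / (q : ℝ) ^ 2) * ∑ μ' : Fin q, ∑ ν' : Fin q,
    Real.log (π (Function.update (Function.update v i μ) j ν)
        * π (Function.update (Function.update v i μ') j ν')
      / (π (Function.update (Function.update v i μ) j ν')
        * π (Function.update (Function.update v i μ') j ν)))

/-- Energy of a pairwise model. -/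
noncomputable def Epair {N q : ℕ} (J : Fin N → Fin N → Fin q → Fin q → ℝ)
    (H : Fin N → Fin q → ℝ) (v : Fin N → Fin q) : ℝ :=
  (∑ p ∈ (Finset.univ : Finset (Fin N × Fin N)).filter (fun p => p.1 < p.2),
      J p.1 p.2 (v p.1) (v p.2)) + ∑ k, H k (v k)

lemma upd_apply {N q : ℕ} (v : Fin N → Fin q) (i j : Fin N) (a b : Fin q) (k : Fin N) :
    Function.update (Function.update v i a) j b k
      = if k = j then b else if k = i then a else v k := by
  simp [Function.update_apply]

lemma alt_const {N q : ℕ} (J : Fin N → Fin N → Fin q → Fin q → ℝ)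
    (H : Fin N → Fin q → ℝ) (i j : Fin N) (a b a' b' : Fin q)
    (v v' : Fin N → Fin q) :
    Epair J H (Function.update (Function.update v i a) j b)
      + Epair J H (Function.update (Function.update v i a') j b')
      - (Epair J H (Function.update (Function.update v i a) j b')
        + Epair J H (Function.update (Function.update v i a') j b))
    = Epair J H (Function.update (Function.update v' i a) j b)
      + Epair J H (Function.update (Function.update v' i a') j b')
      - (Epair J H (Function.update (Function.update v' i a) j b')
        + Epair J H (Function.update (Function.update v' i a') j b)) := by
  have hJ : ∀ u : Fin N → Fin q,
      ∀ p ∈ (Finset.univ : Finset (Fin N × Fin N)).filter (fun p => p.1 < p.2),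
      J p.1 p.2 (Function.update (Function.update u i a) j b p.1)
          (Function.update (Function.update u i a) j b p.2)
        + J p.1 p.2 (Function.update (Function.update u i a') j b' p.1)
          (Function.update (Function.update u i a') j b' p.2)
        - (J p.1 p.2 (Function.update (Function.update u i a) j b' p.1)
            (Function.update (Function.update u i a) j b' p.2)
          + J p.1 p.2 (Function.update (Function.update u i a') j b p.1)
            (Function.update (Function.update u i a') j b p.2))
      = J p.1 p.2 (Function.update (Function.update v' i a) j b p.1)
          (Function.update (Function.update v' i a) j b p.2)
        + J p.1 p.2 (Function.update (Function.update v' i a') j b' p.1)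
          (Function.update (Function.update v' i a') j b' p.2)
        - (J p.1 p.2 (Function.update (Function.update v' i a) j b' p.1)
            (Function.update (Function.update v' i a) j b' p.2)
          + J p.1 p.2 (Function.update (Function.update v' i a') j b p.1)
            (Function.update (Function.update v' i a') j b p.2)) := by
    intro u p _
    simp only [upd_apply]
    by_cases hij : i = j <;> by_cases h1 : p.1 = j <;> by_cases h2 : p.1 = i <;>
      by_cases h3 : p.2 = j <;> by_cases h4 : p.2 = i <;>
      simp [hij, h1, h2, h3, h4] <;> ring
  have hH : ∀ u : Fin N → Fin q, ∀ k : Fin N,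
      H k (Function.update (Function.update u i a) j b k)
        + H k (Function.update (Function.update u i a') j b' k)
        - (H k (Function.update (Function.update u i a) j b' k)
          + H k (Function.update (Function.update u i a') j b k))
      = H k (Function.update (Function.update v' i a) j b k)
        + H k (Function.update (Function.update v' i a') j b' k)
        - (H k (Function.update (Function.update v' i a) j b' k)
          + H k (Function.update (Function.update v' i a') j b k)) := by
    intro u k
    simp only [upd_apply]
    by_cases hij : i = j <;> by_cases h1 : k = j <;> by_cases h2 : k = i <;>
      simp [hij, h1, h2] <;> ring
  have SJ : ∀ u : Fin N → Fin q,
      (∑ p ∈ (Finset.univ : Finset (Fin N × Fin N)).filter (fun p => p.1 < p.2),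
        (J p.1 p.2 (Function.update (Function.update u i a) j b p.1)
            (Function.update (Function.update u i a) j b p.2)
          + J p.1 p.2 (Function.update (Function.update u i a') j b' p.1)
            (Function.update (Function.update u i a') j b' p.2)
          - (J p.1 p.2 (Function.update (Function.update u i a) j b' p.1)
              (Function.update (Function.update u i a) j b' p.2)
            + J p.1 p.2 (Function.update (Function.update u i a') j b p.1)
              (Function.update (Function.update u i a') j b p.2))))
      = ∑ p ∈ (Finset.univ : Finset (Fin N × Fin N)).filter (fun p => p.1 < p.2),
        (J p.1 p.2 (Function.update (Function.update v' i a) j b p.1)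
            (Function.update (Function.update v' i a) j b p.2)
          + J p.1 p.2 (Function.update (Function.update v' i a') j b' p.1)
            (Function.update (Function.update v' i a') j b' p.2)
          - (J p.1 p.2 (Function.update (Function.update v' i a) j b' p.1)
              (Function.update (Function.update v' i a) j b' p.2)
            + J p.1 p.2 (Function.update (Function.update v' i a') j b p.1)
              (Function.update (Function.update v' i a') j b p.2))) :=
    fun u => Finset.sum_congr rfl (hJ u)
  have SH : ∀ u : Fin N → Fin q,
      (∑ k, (H k (Function.update (Function.update u i a) j b k)
          + H k (Function.update (Function.update u i a') j b' k)
          - (H k (Function.update (Function.update u i a) j b' k)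
            + H k (Function.update (Function.update u i a') j b k))))
      = ∑ k, (H k (Function.update (Function.update v' i a) j b k)
          + H k (Function.update (Function.update v' i a') j b' k)
          - (H k (Function.update (Function.update v' i a) j b' k)
            + H k (Function.update (Function.update v' i a') j b k))) :=
    fun u => Finset.sum_congr rfl (fun k _ => hH u k)
  have e1 := SJ v
  have e2 := SH v
  simp only [Finset.sum_sub_distrib, Finset.sum_add_distrib] at e1 e2
  unfold Epair
  linarith

/-- For a purely pairwise model, the variance of the likelihood differential ratio under
the uniform distribution vanishes, and hence so does the higher-order detector `R̂⁽²⁾`. -/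
theorem stmt13 (N q : ℕ) (hq : 0 < q)
    (π : (Fin N → Fin q) → ℝ)
    (J : Fin N → Fin N → Fin q → Fin q → ℝ) (H : Fin N → Fin q → ℝ)
    (C : ℝ) (hC : 0 < C)
    (hπ : ∀ v, π v = C * Real.exp
      ((∑ p ∈ (Finset.univ : Finset (Fin N × Fin N)).filter (fun p => p.1 < p.2),
          J p.1 p.2 (v p.1) (v p.2)) + ∑ i, H i (v i)))
    (i j : Fin N) :
    (∀ μ ν : Fin q,
      EU (fun u => (rhat π i j μ ν u - EU (rhat π i j μ ν)) ^ 2) = 0)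
    ∧ Real.sqrt ((1 / (q : ℝ) ^ 2) * ∑ μ : Fin q, ∑ ν : Fin q,
        EU (fun u => (rhat π i j μ ν u - EU (rhat π i j μ ν)) ^ 2)) = 0 := by
  have hπE : ∀ v, π v = C * Real.exp (Epair J H v) := hπ
  have hlog : ∀ w1 w2 w3 w4 : Fin N → Fin q,
      Real.log (π w1 * π w2 / (π w3 * π w4))
        = Epair J H w1 + Epair J H w2 - (Epair J H w3 + Epair J H w4) := by
    intro w1 w2 w3 w4
    rw [hπE w1, hπE w2, hπE w3, hπE w4]
    have : C * Real.exp (Epair J H w1) * (C * Real.exp (Epair J H w2))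
        / (C * Real.exp (Epair J H w3) * (C * Real.exp (Epair J H w4)))
        = Real.exp (Epair J H w1 + Epair J H w2 - (Epair J H w3 + Epair J H w4)) := by
      rw [Real.exp_sub, Real.exp_add, Real.exp_add]
      field_simp
    rw [this, Real.log_exp]
  have hconst : ∀ μ ν (v v' : Fin N → Fin q),
      rhat π i j μ ν v = rhat π i j μ ν v' := by
    intro μ ν v v'
    unfold rhat
    congr 1
    apply Finset.sum_congr rfl
    intro μ' _
    apply Finset.sum_congr rfl
    intro ν' _
    rw [hlog, hlog]
    exact alt_const J H i j μ ν μ' ν' v v'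
  set v0 : Fin N → Fin q := fun _ => ⟨0, hq⟩ with hv0
  have hqN : ((q : ℝ) ^ N) ≠ 0 := by positivity
  have hEUr : ∀ μ ν, EU (rhat π i j μ ν) = rhat π i j μ ν v0 := by
    intro μ ν
    unfold EU
    rw [Finset.sum_congr rfl (fun u _ => hconst μ ν u v0)]
    rw [Finset.sum_const]
    simp only [Finset.card_univ, Fintype.card_fun, Fintype.card_fin, nsmul_eq_mul]
    push_cast
    field_simp
  have hvar : ∀ μ ν : Fin q,
      EU (fun u => (rhat π i j μ ν u - EU (rhat π i j μ ν)) ^ 2) = 0 := by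
    intro μ ν
    have hz : ∀ u, (rhat π i j μ ν u - EU (rhat π i j μ ν)) ^ 2 = 0 := by
      intro u
      rw [hEUr, hconst μ ν u v0, sub_self]
      ring
    have hfz : (fun u => (rhat π i j μ ν u - EU (rhat π i j μ ν)) ^ 2)
        = fun _ : Fin N → Fin q => (0 : ℝ) := funext hz
    rw [hfz]
    unfold EU
    simp
  refine ⟨hvar, ?_⟩
  simp [hvar]
end
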